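/- In the reduction instance, there exists a subset S ⊆ {1,…,n} with Σ_{i∈S} x_i = K if and only if there exist a path π from a_1 and an admissible timing profile T for π with R(π,T) = 1 + K/κ_n; equivalently (since 1 + K/κ_n is always an upper bound on R(π,T)), if and only if the optimal achievable reward of the instance equals 1 + K/κ_n. This establishes the correctness of the reduction from the subset-sum problem to the Optimal Path and Timing-Profile (OPTP) problem, proving OPTP NP-hard. -/
import Mathlib


open MeasureTheory
open scoped Classical

/-- Vertices of the reduction instance: for each hexagon index `i` the vertices
`a i, b i, c i, d i, e i, f i`, plus the two special vertices `u` and `w`. -/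
inductive RVert : Type
  | a : ℕ → RVert
  | b : ℕ → RVert
  | c : ℕ → RVert
  | d : ℕ → RVert
  | e : ℕ → RVert
  | f : ℕ → RVert
  | u : RVert
  | w : RVert
deriving DecidableEq

/-- `κ_i = Σ_{j=1}^{i} x_j` (so `κ_0 = 0`). -/
def kap (x : ℕ → ℕ) (i : ℕ) : ℕ := ∑ j ∈ Finset.Icc 1 i, x j

/-- `y_i = Σ_{j=1}^{i-1} κ_j` (so `y_0 = y_1 = 0`). -/
def yv (x : ℕ → ℕ) (i : ℕ) : ℕ := ∑ j ∈ Finset.Icc 1 (i - 1), kap x j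

/-- `α_i = x_i / κ_n`. -/
noncomputable def alphav (x : ℕ → ℕ) (n i : ℕ) : ℝ := (x i : ℝ) / (kap x n : ℝ)

/-- Edges of the reduction instance: `a_i→b_i, b_i→c_i, c_i→f_i, a_i→d_i,
d_i→e_i, e_i→f_i` for `1 ≤ i ≤ n`, `f_i→a_{i+1}` for `i < n`, `f_n→u`, `u→w`. -/
def redE (n : ℕ) : RVert → RVert → Prop := fun p q =>
  (∃ i, 1 ≤ i ∧ i ≤ n ∧
    ((p = RVert.a i ∧ q = RVert.b i) ∨ (p = RVert.b i ∧ q = RVert.c i) ∨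
     (p = RVert.c i ∧ q = RVert.f i) ∨ (p = RVert.a i ∧ q = RVert.d i) ∨
     (p = RVert.d i ∧ q = RVert.e i) ∨ (p = RVert.e i ∧ q = RVert.f i))) ∨
  (∃ i, 1 ≤ i ∧ i < n ∧ p = RVert.f i ∧ q = RVert.a (i + 1)) ∨
  (p = RVert.f n ∧ q = RVert.u) ∨ (p = RVert.u ∧ q = RVert.w)

/-- Edge lengths: `ℓ(b_i, c_i) = κ_i`, `ℓ(d_i, e_i) = κ_{i-1}`, all other edges
have length `0`. -/
noncomputable def redLen (x : ℕ → ℕ) : RVert → RVert → ℝ := fun p q =>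
  match p, q with
  | RVert.b i, RVert.c j => if i = j then (kap x i : ℝ) else 0
  | RVert.d i, RVert.e j => if i = j then (kap x (i - 1) : ℝ) else 0
  | _, _ => 0

/-- Assistance intervals: `𝓘(b_i) = 𝓘(c_i) = {[y_i, y_i + α_i]}` for
`1 ≤ i ≤ n`, `𝓘(w) = {[y_n + K, y_n + K + 1]}`, and `𝓘` is empty elsewhere. -/
noncomputable def redI (x : ℕ → ℕ) (n K : ℕ) : RVert → Finset (ℝ × ℝ) := fun p =>
  match p with
  | RVert.b i =>
      if 1 ≤ i ∧ i ≤ n then {((yv x i : ℝ), (yv x i : ℝ) + alphav x n i)} else ∅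
  | RVert.c i =>
      if 1 ≤ i ∧ i ≤ n then {((yv x i : ℝ), (yv x i : ℝ) + alphav x n i)} else ∅
  | RVert.w => {((yv x n : ℝ) + K, (yv x n : ℝ) + K + 1)}
  | _ => ∅

/-- `v 0, v 1, …, v k` is a path in the reduction instance. -/
def rIsPath (n : ℕ) (v : ℕ → RVert) (k : ℕ) : Prop :=
  ∀ i, i < k → redE n (v i) (v (i + 1))

/-- `ℓ_π(v_i)`: length of the path from `v 0` to `v i`. -/
noncomputable def rPathLen (x : ℕ → ℕ) (v : ℕ → RVert) (i : ℕ) : ℝ :=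
  ∑ j ∈ Finset.range i, redLen x (v j) (v (j + 1))

/-- `ℓ⁺_π(v_i)` (with the convention `ℓ(v_k, v_{k+1}) = 0`). -/
noncomputable def rEllPlus (x : ℕ → ℕ) (v : ℕ → RVert) (k i : ℕ) : ℝ :=
  rPathLen x v i + (if i < k then redLen x (v i) (v (i + 1)) / 2 else 0)

/-- Reward at a vertex `p` between times `t` and `t'`:
`R(p, t, t') = Σ_{I ∈ 𝓘(p)} λ([t,t'] ∩ I)`. -/
noncomputable def rvReward (x : ℕ → ℕ) (n K : ℕ) (p : RVert) (t t' : ℝ) : ℝ :=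
  ∑ q ∈ redI x n K p, (volume (Set.Icc t t' ∩ Set.Icc q.1 q.2)).toReal

/-- `T 0, …, T (k-1)` is a timing profile for the path `v 0, …, v k` with time
horizon `H = y_n + K + 1`. -/
def rIsTP (x : ℕ → ℕ) (v : ℕ → RVert) (k : ℕ) (H : ℝ) (T : ℕ → ℝ) : Prop :=
  (1 ≤ k → rEllPlus x v k 0 ≤ T 0) ∧
  (∀ i, i + 2 ≤ k → T i + (rEllPlus x v k (i + 1) - rEllPlus x v k i) ≤ T (i + 1)) ∧
  (1 ≤ k → T (k - 1) + (rEllPlus x v k k - rEllPlus x v k (k - 1)) ≤ H)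

/-- Reward of a timing profile over horizon `H`:
`R(π, T) = Σ_{i=0}^{k} R(v_i, t_{i-1}, t_i)` with `t_{-1} = 0`, `t_k = H`. -/
noncomputable def rProfReward (x : ℕ → ℕ) (n K : ℕ) (v : ℕ → RVert) (k : ℕ)
    (H : ℝ) (T : ℕ → ℝ) : ℝ :=
  ∑ i ∈ Finset.range (k + 1),
    rvReward x n K (v i) (if i = 0 then 0 else T (i - 1)) (if i = k then H else T i)

/-- Admissibility: the robot leaves `u` by time `y_n + K` and the path does not
end at `u`. -/
def rAdmissible (x : ℕ → ℕ) (n K : ℕ) (v : ℕ → RVert) (k : ℕ) (T : ℕ → ℝ) : Prop :=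
  (∀ i, i < k → v i = RVert.u → T i ≤ (yv x n : ℝ) + K) ∧ v k ≠ RVert.u

namespace Stmt16Aux

open Finset

lemma kap_succ (x : ℕ → ℕ) (i : ℕ) : kap x (i+1) = kap x i + x (i+1) :=
  Finset.sum_Icc_succ_top (by omega) x

lemma kap_zero (x : ℕ → ℕ) : kap x 0 = 0 := by simp [kap]

lemma yv_succ (x : ℕ → ℕ) (i : ℕ) : yv x (i+1) = yv x i + kap x i := by
  cases i with
  | zero => simp [yv, kap]
  | succ j =>
      show yv x (j+1+1) = _
      unfold yv
      simp only [Nat.add_sub_cancel]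
      rw [Finset.sum_Icc_succ_top (by omega)]

lemma redLen_a (x : ℕ → ℕ) (i : ℕ) (q : RVert) : redLen x (RVert.a i) q = 0 := by
  cases q <;> simp [redLen]

lemma redLen_c (x : ℕ → ℕ) (i : ℕ) (q : RVert) : redLen x (RVert.c i) q = 0 := by
  cases q <;> simp [redLen]

lemma redLen_e (x : ℕ → ℕ) (i : ℕ) (q : RVert) : redLen x (RVert.e i) q = 0 := by
  cases q <;> simp [redLen]

lemma redLen_f (x : ℕ → ℕ) (i : ℕ) (q : RVert) : redLen x (RVert.f i) q = 0 := by
  cases q <;> simp [redLen]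

lemma redLen_u (x : ℕ → ℕ) (q : RVert) : redLen x RVert.u q = 0 := by
  cases q <;> simp [redLen]

lemma redLen_bc (x : ℕ → ℕ) (i : ℕ) : redLen x (RVert.b i) (RVert.c i) = (kap x i : ℝ) := by
  simp [redLen]

lemma redLen_de (x : ℕ → ℕ) (i : ℕ) : redLen x (RVert.d i) (RVert.e i) = (kap x (i-1) : ℝ) := by
  simp [redLen]

lemma redLen_nonneg (x : ℕ → ℕ) (p q : RVert) : 0 ≤ redLen x p q := by
  cases p <;> cases q <;> simp [redLen] <;> split_ifs <;> positivity

/-- The canonical path determined by a branch-choice set `S`. -/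
def pathV (n : ℕ) (S : Finset ℕ) (m : ℕ) : RVert :=
  if m < 4*n then
    (if m % 4 = 0 then RVert.a (m/4+1)
     else if m % 4 = 1 then (if m/4+1 ∈ S then RVert.b (m/4+1) else RVert.d (m/4+1))
     else if m % 4 = 2 then (if m/4+1 ∈ S then RVert.c (m/4+1) else RVert.e (m/4+1))
     else RVert.f (m/4+1))
  else if m = 4*n then RVert.u else RVert.w

variable {n i : ℕ} {S : Finset ℕ}

lemma pathV_a (h1 : 1 ≤ i) (h2 : i ≤ n) : pathV n S (4*(i-1)) = RVert.a i := by
  have hlt : 4*(i-1) < 4*n := by omega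
  have hm : (4*(i-1)) % 4 = 0 := by omega
  have hd : (4*(i-1))/4 + 1 = i := by omega
  simp [pathV, hlt, hm, hd]
  omega

lemma pathV_b (h1 : 1 ≤ i) (h2 : i ≤ n) (hS : i ∈ S) : pathV n S (4*(i-1)+1) = RVert.b i := by
  have hlt : 4*(i-1)+1 < 4*n := by omega
  have hm : (4*(i-1)+1) % 4 = 1 := by omega
  have hd : (4*(i-1)+1)/4 + 1 = i := by omega
  simp [pathV, hlt, hm, hd, hS]

lemma pathV_d (h1 : 1 ≤ i) (h2 : i ≤ n) (hS : i ∉ S) : pathV n S (4*(i-1)+1) = RVert.d i := by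
  have hlt : 4*(i-1)+1 < 4*n := by omega
  have hm : (4*(i-1)+1) % 4 = 1 := by omega
  have hd : (4*(i-1)+1)/4 + 1 = i := by omega
  simp [pathV, hlt, hm, hd, hS]

lemma pathV_c (h1 : 1 ≤ i) (h2 : i ≤ n) (hS : i ∈ S) : pathV n S (4*(i-1)+2) = RVert.c i := by
  have hlt : 4*(i-1)+2 < 4*n := by omega
  have hm : (4*(i-1)+2) % 4 = 2 := by omega
  have hd : (4*(i-1)+2)/4 + 1 = i := by omega
  simp [pathV, hlt, hm, hd, hS]

lemma pathV_e (h1 : 1 ≤ i) (h2 : i ≤ n) (hS : i ∉ S) : pathV n S (4*(i-1)+2) = RVert.e i := by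
  have hlt : 4*(i-1)+2 < 4*n := by omega
  have hm : (4*(i-1)+2) % 4 = 2 := by omega
  have hd : (4*(i-1)+2)/4 + 1 = i := by omega
  simp [pathV, hlt, hm, hd, hS]

lemma pathV_f (h1 : 1 ≤ i) (h2 : i ≤ n) : pathV n S (4*(i-1)+3) = RVert.f i := by
  have hlt : 4*(i-1)+3 < 4*n := by omega
  have hm : (4*(i-1)+3) % 4 = 3 := by omega
  have hd : (4*(i-1)+3)/4 + 1 = i := by omega
  simp [pathV, hlt, hm, hd]

lemma pathV_u : pathV n S (4*n) = RVert.u := by simp [pathV]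

lemma pathV_w {m : ℕ} (h : 4*n < m) : pathV n S m = RVert.w := by
  have h1 : ¬ (m < 4*n) := by omega
  have h2 : m ≠ 4*n := by omega
  simp [pathV, h1, h2]

lemma pathV_eq_u {m : ℕ} (h : pathV n S m = RVert.u) : m = 4*n := by
  by_contra hne
  rcases lt_or_gt_of_ne hne with hlt | hgt
  · have h0 : m % 4 = 0 ∨ m % 4 = 1 ∨ m % 4 = 2 ∨ m % 4 = 3 := by omega
    rcases h0 with h0|h0|h0|h0 <;> simp only [pathV, hlt, h0, if_true, if_pos, reduceIte] at h <;> first | (split_ifs at h <;> simp_all) | simp_all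
  · rw [pathV_w hgt] at h; simp_all

/-! Successor lemmas for edges. -/

lemma redE_from_a {q : RVert} (h : redE n (RVert.a i) q) :
    1 ≤ i ∧ i ≤ n ∧ (q = RVert.b i ∨ q = RVert.d i) := by
  rcases h with ⟨j, hj1, hj2, hc⟩ | ⟨j, hj1, hj2, hp, hq⟩ | ⟨hp, hq⟩ | ⟨hp, hq⟩ <;>
    [skip; exact absurd hp (by simp); exact absurd hp (by simp); exact absurd hp (by simp)]
  rcases hc with ⟨hp,hq⟩|⟨hp,hq⟩|⟨hp,hq⟩|⟨hp,hq⟩|⟨hp,hq⟩|⟨hp,hq⟩ <;> simp_all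

lemma redE_from_b {q : RVert} (h : redE n (RVert.b i) q) : q = RVert.c i := by
  rcases h with ⟨j, hj1, hj2, hc⟩ | ⟨j, hj1, hj2, hp, hq⟩ | ⟨hp, hq⟩ | ⟨hp, hq⟩ <;>
    [skip; exact absurd hp (by simp); exact absurd hp (by simp); exact absurd hp (by simp)]
  rcases hc with ⟨hp,hq⟩|⟨hp,hq⟩|⟨hp,hq⟩|⟨hp,hq⟩|⟨hp,hq⟩|⟨hp,hq⟩ <;> simp_all

lemma redE_from_c {q : RVert} (h : redE n (RVert.c i) q) : q = RVert.f i := by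
  rcases h with ⟨j, hj1, hj2, hc⟩ | ⟨j, hj1, hj2, hp, hq⟩ | ⟨hp, hq⟩ | ⟨hp, hq⟩ <;>
    [skip; exact absurd hp (by simp); exact absurd hp (by simp); exact absurd hp (by simp)]
  rcases hc with ⟨hp,hq⟩|⟨hp,hq⟩|⟨hp,hq⟩|⟨hp,hq⟩|⟨hp,hq⟩|⟨hp,hq⟩ <;> simp_all

lemma redE_from_d {q : RVert} (h : redE n (RVert.d i) q) : q = RVert.e i := by
  rcases h with ⟨j, hj1, hj2, hc⟩ | ⟨j, hj1, hj2, hp, hq⟩ | ⟨hp, hq⟩ | ⟨hp, hq⟩ <;>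
    [skip; exact absurd hp (by simp); exact absurd hp (by simp); exact absurd hp (by simp)]
  rcases hc with ⟨hp,hq⟩|⟨hp,hq⟩|⟨hp,hq⟩|⟨hp,hq⟩|⟨hp,hq⟩|⟨hp,hq⟩ <;> simp_all

lemma redE_from_e {q : RVert} (h : redE n (RVert.e i) q) : q = RVert.f i := by
  rcases h with ⟨j, hj1, hj2, hc⟩ | ⟨j, hj1, hj2, hp, hq⟩ | ⟨hp, hq⟩ | ⟨hp, hq⟩ <;>
    [skip; exact absurd hp (by simp); exact absurd hp (by simp); exact absurd hp (by simp)]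
  rcases hc with ⟨hp,hq⟩|⟨hp,hq⟩|⟨hp,hq⟩|⟨hp,hq⟩|⟨hp,hq⟩|⟨hp,hq⟩ <;> simp_all

lemma redE_from_f {q : RVert} (h : redE n (RVert.f i) q) :
    (i < n ∧ q = RVert.a (i+1)) ∨ (i = n ∧ q = RVert.u) := by
  rcases h with ⟨j, hj1, hj2, hc⟩ | ⟨j, hj1, hj2, hp, hq⟩ | ⟨hp, hq⟩ | ⟨hp, hq⟩
  · rcases hc with ⟨hp,hq⟩|⟨hp,hq⟩|⟨hp,hq⟩|⟨hp,hq⟩|⟨hp,hq⟩|⟨hp,hq⟩ <;> simp_all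
  · left; simp_all
  · right; simp_all
  · exact absurd hp (by simp)

lemma redE_from_u {q : RVert} (h : redE n RVert.u q) : q = RVert.w := by
  rcases h with ⟨j, hj1, hj2, hc⟩ | ⟨j, hj1, hj2, hp, hq⟩ | ⟨hp, hq⟩ | ⟨hp, hq⟩
  · rcases hc with ⟨hp,hq⟩|⟨hp,hq⟩|⟨hp,hq⟩|⟨hp,hq⟩|⟨hp,hq⟩|⟨hp,hq⟩ <;> simp_all
  · simp_all
  · simp_all
  · exact hq

lemma redE_from_w {q : RVert} (h : redE n RVert.w q) : False := by
  rcases h with ⟨j, hj1, hj2, hc⟩ | ⟨j, hj1, hj2, hp, hq⟩ | ⟨hp, hq⟩ | ⟨hp, hq⟩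
  · rcases hc with ⟨hp,hq⟩|⟨hp,hq⟩|⟨hp,hq⟩|⟨hp,hq⟩|⟨hp,hq⟩|⟨hp,hq⟩ <;> simp_all
  · simp_all
  · simp_all
  · simp_all

/-- The canonical path is a path. -/
lemma pathV_isPath (hn : 1 ≤ n) : rIsPath n (pathV n S) (4*n+1) := by
  intro m hm
  by_cases hmu : m = 4*n
  · subst hmu
    rw [pathV_u, pathV_w (by omega)]
    exact Or.inr (Or.inr (Or.inr ⟨rfl, rfl⟩))
  · have hlt : m < 4*n := by omega
    set i := m/4 + 1 with hidef
    have hi1 : 1 ≤ i := by omega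
    have hi2 : i ≤ n := by omega
    have h4 : m % 4 = 0 ∨ m % 4 = 1 ∨ m % 4 = 2 ∨ m % 4 = 3 := by omega
    rcases h4 with h4|h4|h4|h4
    · have e1 : m = 4*(i-1) := by omega
      have e2 : m + 1 = 4*(i-1)+1 := by omega
      rw [e2, e1, pathV_a hi1 hi2]
      by_cases hS : i ∈ S
      · rw [pathV_b hi1 hi2 hS]
        exact Or.inl ⟨i, hi1, hi2, Or.inl ⟨rfl, rfl⟩⟩
      · rw [pathV_d hi1 hi2 hS]
        exact Or.inl ⟨i, hi1, hi2, Or.inr (Or.inr (Or.inr (Or.inl ⟨rfl, rfl⟩)))⟩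
    · have e1 : m = 4*(i-1)+1 := by omega
      have e2 : m + 1 = 4*(i-1)+2 := by omega
      rw [e2, e1]
      by_cases hS : i ∈ S
      · rw [pathV_b hi1 hi2 hS, pathV_c hi1 hi2 hS]
        exact Or.inl ⟨i, hi1, hi2, Or.inr (Or.inl ⟨rfl, rfl⟩)⟩
      · rw [pathV_d hi1 hi2 hS, pathV_e hi1 hi2 hS]
        exact Or.inl ⟨i, hi1, hi2, Or.inr (Or.inr (Or.inr (Or.inr (Or.inl ⟨rfl, rfl⟩))))⟩
    · have e1 : m = 4*(i-1)+2 := by omega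
      have e2 : m + 1 = 4*(i-1)+3 := by omega
      rw [e2, e1]
      by_cases hS : i ∈ S
      · rw [pathV_c hi1 hi2 hS, pathV_f hi1 hi2]
        exact Or.inl ⟨i, hi1, hi2, Or.inr (Or.inr (Or.inl ⟨rfl, rfl⟩))⟩
      · rw [pathV_e hi1 hi2 hS, pathV_f hi1 hi2]
        exact Or.inl ⟨i, hi1, hi2, Or.inr (Or.inr (Or.inr (Or.inr (Or.inr ⟨rfl, rfl⟩))))⟩
    · have e1 : m = 4*(i-1)+3 := by omega
      by_cases hin : i < n
      · have e2 : m + 1 = 4*((i+1)-1) := by omega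
        rw [e2, e1, pathV_f hi1 hi2, pathV_a (by omega) (by omega)]
        exact Or.inr (Or.inl ⟨i, hi1, hin, rfl, rfl⟩)
      · have hineq : i = n := by omega
        have e2 : m + 1 = 4*n := by omega
        rw [e2, e1, pathV_f hi1 hi2, pathV_u, hineq]
        exact Or.inr (Or.inr (Or.inl ⟨rfl, rfl⟩))

/-! Path length computations. -/

lemma rPathLen_succ (x : ℕ → ℕ) (v : ℕ → RVert) (m : ℕ) :
    rPathLen x v (m+1) = rPathLen x v m + redLen x (v m) (v (m+1)) :=
  Finset.sum_range_succ _ _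

lemma sum_blocks (g : ℕ → ℝ) (N : ℕ) :
    ∑ m ∈ Finset.range (4*N), g m
      = ∑ j ∈ Finset.range N, (g (4*j) + g (4*j+1) + g (4*j+2) + g (4*j+3)) := by
  induction N with
  | zero => simp
  | succ N ih =>
      rw [show 4*(N+1) = (4*N)+1+1+1+1 by ring, Finset.sum_range_succ, Finset.sum_range_succ,
        Finset.sum_range_succ, Finset.sum_range_succ, ih, Finset.sum_range_succ,
        show 4*N+1+1 = 4*N+2 by omega, show 4*N+1+1+1 = 4*N+3 by omega]
      ring
  
lemma rPathLen_pathV (x : ℕ → ℕ) {j : ℕ} (hj : j ≤ n) :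
    rPathLen x (pathV n S) (4*j)
      = (yv x j : ℝ) + ∑ i ∈ Finset.Icc 1 j, (if i ∈ S then (x i : ℝ) else 0) := by
  induction j with
  | zero => simp [rPathLen, yv]
  | succ j ih =>
      have hi1 : 1 ≤ j+1 := by omega
      have hi2 : j+1 ≤ n := hj
      have va : pathV n S (4*j) = RVert.a (j+1) := by
        have := pathV_a (i := j+1) (S := S) hi1 hi2; simpa using this
      have vf : pathV n S (4*j+3) = RVert.f (j+1) := by
        have := pathV_f (i := j+1) (S := S) hi1 hi2; simpa using this
      rw [show 4*(j+1) = (4*j)+1+1+1+1 by ring, rPathLen_succ, rPathLen_succ, rPathLen_succ,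
        rPathLen_succ, ih (by omega), show 4*j+1+1 = 4*j+2 by omega,
        show 4*j+1+1+1 = 4*j+3 by omega, show 4*j+1+1+1+1 = 4*j+4 by omega,
        va, redLen_a, vf, redLen_f, yv_succ, Finset.sum_Icc_succ_top hi1]
      by_cases hS : j+1 ∈ S
      · have vb : pathV n S (4*j+1) = RVert.b (j+1) := by
          have := pathV_b (i := j+1) (S := S) hi1 hi2 hS; simpa using this
        have vc : pathV n S (4*j+2) = RVert.c (j+1) := by
          have := pathV_c (i := j+1) (S := S) hi1 hi2 hS; simpa using this
        rw [vb, vc, redLen_bc, redLen_c]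
        push_cast [kap_succ, hS]
        ring
      · have vb : pathV n S (4*j+1) = RVert.d (j+1) := by
          have := pathV_d (i := j+1) (S := S) hi1 hi2 hS; simpa using this
        have vc : pathV n S (4*j+2) = RVert.e (j+1) := by
          have := pathV_e (i := j+1) (S := S) hi1 hi2 hS; simpa using this
        rw [vb, vc, redLen_de, redLen_e]
        simp only [Nat.add_sub_cancel, hS, if_false]
        push_cast
        ring

/-! Volume lemmas. -/

open MeasureTheory in
lemma vol_eval (a b p q : ℝ) :
    (volume (Set.Icc a b ∩ Set.Icc p q)).toReal = max 0 (min b q - max a p) := by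
  rw [Set.Icc_inter_Icc, Real.volume_Icc, ENNReal.toReal_ofReal', max_comm]

open MeasureTheory in
lemma vol_le (a b p q : ℝ) (hpq : p ≤ q) :
    (volume (Set.Icc a b ∩ Set.Icc p q)).toReal ≤ q - p := by
  rw [vol_eval]
  have h1 := min_le_right b q
  have h2 := le_max_right a p
  apply max_le (by linarith) (by linarith)

open MeasureTheory in
lemma vol_full (a b p q : ℝ) (h1 : a ≤ p) (h2 : q ≤ b) (h3 : p ≤ q) :
    (volume (Set.Icc a b ∩ Set.Icc p q)).toReal = q - p := by
  rw [vol_eval, min_eq_right h2, max_eq_right h1, max_eq_right (by linarith)]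

open MeasureTheory in
lemma vol_pair (a b c p q : ℝ) (hab : a ≤ b) (hbc : b ≤ c) :
    (volume (Set.Icc a b ∩ Set.Icc p q)).toReal + (volume (Set.Icc b c ∩ Set.Icc p q)).toReal
      = (volume (Set.Icc a c ∩ Set.Icc p q)).toReal := by
  have h1 : volume (Set.Icc a b ∩ Set.Icc p q) ≠ ⊤ :=
    ne_top_of_le_ne_top measure_Icc_lt_top.ne (measure_mono Set.inter_subset_left)
  have h2 : volume (Set.Icc b c ∩ Set.Icc p q) ≠ ⊤ :=
    ne_top_of_le_ne_top measure_Icc_lt_top.ne (measure_mono Set.inter_subset_left)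
  have hunion : (Set.Icc a b ∩ Set.Icc p q) ∪ (Set.Icc b c ∩ Set.Icc p q)
      = Set.Icc a c ∩ Set.Icc p q := by
    rw [← Set.union_inter_distrib_right, Set.Icc_union_Icc_eq_Icc hab hbc]
  have hinter : volume ((Set.Icc a b ∩ Set.Icc p q) ∩ (Set.Icc b c ∩ Set.Icc p q)) = 0 := by
    refine measure_mono_null ?_ (Real.volume_singleton (a := b))
    intro z hz
    simp only [Set.mem_inter_iff, Set.mem_Icc] at hz
    have : z = b := le_antisymm hz.1.1.2 hz.2.1.1
    simp [this]
  have hadd := measure_union_add_inter (μ := volume) (Set.Icc a b ∩ Set.Icc p q)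
    ((measurableSet_Icc).inter measurableSet_Icc : MeasurableSet (Set.Icc b c ∩ Set.Icc p q))
  rw [hunion, hinter, add_zero] at hadd
  rw [← ENNReal.toReal_add h1 h2, ← hadd]

/-! Generic facts. -/

lemma sumIte_le_kap (x : ℕ → ℕ) (S : Finset ℕ) (j : ℕ) :
    ∑ i ∈ Finset.Icc 1 j, (if i ∈ S then (x i : ℝ) else 0) ≤ (kap x j : ℝ) := by
  have : (kap x j : ℝ) = ∑ i ∈ Finset.Icc 1 j, (x i : ℝ) := by push_cast [kap]; rfl
  rw [this]
  apply Finset.sum_le_sum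
  intro i _
  split_ifs
  · exact le_rfl
  · positivity

lemma sumIte_nonneg (x : ℕ → ℕ) (S : Finset ℕ) (j : ℕ) :
    0 ≤ ∑ i ∈ Finset.Icc 1 j, (if i ∈ S then (x i : ℝ) else 0) := by
  apply Finset.sum_nonneg
  intro i _
  split_ifs <;> positivity

lemma sumIte_eq (x : ℕ → ℕ) (S : Finset ℕ) (hsub : S ⊆ Finset.Icc 1 n) (f : ℕ → ℝ) :
    ∑ i ∈ Finset.Icc 1 n, (if i ∈ S then f i else 0) = ∑ i ∈ S, f i := by
  rw [Finset.sum_ite_mem, Finset.inter_eq_right.mpr hsub]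

lemma kapn_pos (x : ℕ → ℕ) (hn : 1 ≤ n) (hx1 : 0 < x 1) : 0 < kap x n := by
  have h1 : (1:ℕ) ∈ Finset.Icc 1 n := by simp [hn]
  have := Finset.single_le_sum (f := x) (fun i _ => Nat.zero_le _) h1
  unfold kap
  omega

/-- The forward direction. -/
lemma forward (n : ℕ) (hn : 1 ≤ n) (x : ℕ → ℕ) (hx : ∀ i, 1 ≤ i → i ≤ n → 0 < x i)
    (K : ℕ) (S : Finset ℕ) (hsub : S ⊆ Finset.Icc 1 n) (hsum : ∑ i ∈ S, x i = K) :
    ∃ (v : ℕ → RVert) (k : ℕ) (T : ℕ → ℝ),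
      rIsPath n v k ∧ v 0 = RVert.a 1 ∧
      rIsTP x v k ((yv x n : ℝ) + K + 1) T ∧
      rAdmissible x n K v k T ∧
      rProfReward x n K v k ((yv x n : ℝ) + K + 1) T = 1 + (K : ℝ) / (kap x n : ℝ) := by
  classical
  set H : ℝ := (yv x n : ℝ) + K + 1 with hH
  set vv : ℕ → RVert := pathV n S with hvv
  set k : ℕ := 4*n+1 with hk
  set T : ℕ → ℝ := fun m => rEllPlus x vv k m with hT
  set L : ℕ → ℝ := rPathLen x vv with hL
  have hkapn : 0 < kap x n := kapn_pos x hn (hx 1 le_rfl hn)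
  have hκ : (0:ℝ) < (kap x n : ℝ) := by exact_mod_cast hkapn
  have hsumIte : ∑ i ∈ Finset.Icc 1 n, (if i ∈ S then (x i : ℝ) else 0) = (K : ℝ) := by
    rw [sumIte_eq x S hsub]
    push_cast [← hsum]
    rfl
  have hL4n : L (4*n) = (yv x n : ℝ) + K := by
    rw [hL, hvv, rPathLen_pathV x le_rfl, hsumIte]
  have hv0 : vv 0 = RVert.a 1 := by
    have := pathV_a (n := n) (S := S) (i := 1) le_rfl hn
    simpa using this
  have hTeq : ∀ m, m < k → T m = L m + redLen x (vv m) (vv (m+1)) / 2 := by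
    intro m hm
    simp [hT, rEllPlus, hm, hL]
  have hTu : T (4*n) = (yv x n : ℝ) + K := by
    rw [hTeq (4*n) (by omega)]
    have : vv (4*n) = RVert.u := pathV_u
    rw [this, redLen_u, hL4n]
    ring
  refine ⟨vv, k, T, pathV_isPath hn, hv0, ?_, ?_, ?_⟩
  · refine ⟨fun _ => le_refl _, fun i _ => by simp [hT], fun _ => ?_⟩
    rw [show k - 1 = 4*n by omega]
    have h1 : T (4*n) + (rEllPlus x vv k k - rEllPlus x vv k (4*n)) = rEllPlus x vv k k := by
      simp [hT]
    rw [hT] at h1 ⊢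
    rw [h1]
    have h2 : rEllPlus x vv k k = L k := by
      simp [rEllPlus, hL, hk]
    rw [h2, hk, hL, rPathLen_succ]
    have : vv (4*n) = RVert.u := pathV_u
    rw [this, redLen_u, ← hL, hL4n]
    simp [hH]
  · constructor
    · intro m hm hu
      have hm4 : m = 4*n := pathV_eq_u hu
      rw [hm4, hTu]
    · have : vv k = RVert.w := pathV_w (by omega)
      rw [this]
      simp
  · -- reward computation
    have hblock : ∀ j < n,
        (rvReward x n K (vv (4*j)) (if 4*j = 0 then 0 else T (4*j-1)) (if 4*j = k then H else T (4*j))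
        + rvReward x n K (vv (4*j+1)) (T (4*j)) (if 4*j+1 = k then H else T (4*j+1))
        + rvReward x n K (vv (4*j+2)) (T (4*j+1)) (if 4*j+2 = k then H else T (4*j+2))
        + rvReward x n K (vv (4*j+3)) (T (4*j+2)) (if 4*j+3 = k then H else T (4*j+3)))
          = (if j+1 ∈ S then alphav x n (j+1) else 0) := by
      intro j hj
      have hi1 : 1 ≤ j+1 := by omega
      have hi2 : j+1 ≤ n := by omega
      have va : vv (4*j) = RVert.a (j+1) := by
        have := pathV_a (n := n) (S := S) (i := j+1) hi1 hi2; simpa [hvv] using this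
      have vf : vv (4*j+3) = RVert.f (j+1) := by
        have := pathV_f (n := n) (S := S) (i := j+1) hi1 hi2; simpa [hvv] using this
      have hga : rvReward x n K (vv (4*j)) (if 4*j = 0 then 0 else T (4*j-1)) (if 4*j = k then H else T (4*j)) = 0 := by
        rw [va]; simp [rvReward, redI]
      have hgf : rvReward x n K (vv (4*j+3)) (T (4*j+2)) (if 4*j+3 = k then H else T (4*j+3)) = 0 := by
        rw [vf]; simp [rvReward, redI]
      by_cases hS : j+1 ∈ S
      · have vb : vv (4*j+1) = RVert.b (j+1) := by
          have := pathV_b (n := n) (S := S) (i := j+1) hi1 hi2 hS; simpa [hvv] using this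
        have vc : vv (4*j+2) = RVert.c (j+1) := by
          have := pathV_c (n := n) (S := S) (i := j+1) hi1 hi2 hS; simpa [hvv] using this
        have hLab : L (4*j+1) = L (4*j) := by
          rw [hL, rPathLen_succ, va, redLen_a, ← hL]; ring
        have hT0 : T (4*j) = L (4*j) := by
          rw [hTeq (4*j) (by omega), va, redLen_a]; ring
        have hT1 : T (4*j+1) = L (4*j) + (kap x (j+1) : ℝ)/2 := by
          rw [hTeq (4*j+1) (by omega), show 4*j+1+1 = 4*j+2 by omega, vb, vc, redLen_bc, hLab]
        have hT2 : T (4*j+2) = L (4*j) + (kap x (j+1) : ℝ) := by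
          rw [hTeq (4*j+2) (by omega), vc, redLen_c, hL, rPathLen_succ,
            show 4*j+1+1 = 4*j+2 by omega, vb, vc, redLen_bc, ← hL, hLab]
          ring
        have hne1 : ¬ (4*j+1 = k) := by omega
        have hne2 : ¬ (4*j+2 = k) := by omega
        have hD : L (4*j) = (yv x j : ℝ) + ∑ i ∈ Finset.Icc 1 j, (if i ∈ S then (x i : ℝ) else 0) := by
          rw [hL, hvv, rPathLen_pathV x (by omega)]
        have hDle : L (4*j) ≤ (yv x (j+1) : ℝ) := by
          rw [hD, yv_succ]
          have := sumIte_le_kap x S j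
          push_cast
          linarith
        have hDge : (yv x (j+1) : ℝ) + alphav x n (j+1) ≤ L (4*j) + (kap x (j+1) : ℝ) := by
          have hα : alphav x n (j+1) ≤ (x (j+1) : ℝ) := by
            rw [alphav]
            apply div_le_self (by positivity)
            exact_mod_cast hkapn
          have hσ := sumIte_nonneg x S j
          rw [hD, yv_succ, kap_succ]
          push_cast
          linarith
        have hα0 : 0 ≤ alphav x n (j+1) := by rw [alphav]; positivity
        rw [hga, hgf, vb, vc, if_neg hne1, if_neg hne2, hT0, hT1, hT2]
        simp only [rvReward, redI, hi1, hi2, and_true, if_true, true_and, if_pos,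
          Finset.sum_singleton]
        rw [zero_add, add_zero]
        have hkj : (0:ℝ) ≤ (kap x (j+1) : ℝ) := Nat.cast_nonneg _
        rw [vol_pair _ _ _ _ _ (by linarith) (by linarith)]
        rw [vol_full _ _ _ _ hDle (by linarith) (by linarith), if_pos hS]
        ring
      · have vb : vv (4*j+1) = RVert.d (j+1) := by
          have := pathV_d (n := n) (S := S) (i := j+1) hi1 hi2 hS; simpa [hvv] using this
        have vc : vv (4*j+2) = RVert.e (j+1) := by
          have := pathV_e (n := n) (S := S) (i := j+1) hi1 hi2 hS; simpa [hvv] using this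
        rw [hga, hgf, vb, vc, if_neg hS]
        simp [rvReward, redI]
    -- assemble
    show (∑ m ∈ Finset.range (k+1), rvReward x n K (vv m)
        (if m = 0 then 0 else T (m-1)) (if m = k then H else T m)) = 1 + (K : ℝ) / (kap x n : ℝ)
    rw [show k + 1 = 4*n + 1 + 1 by omega, Finset.sum_range_succ, Finset.sum_range_succ,
      sum_blocks]
    have hgu : rvReward x n K (vv (4*n)) (if 4*n = 0 then 0 else T (4*n-1)) (if 4*n = k then H else T (4*n)) = 0 := by
      have : vv (4*n) = RVert.u := pathV_u
      rw [this]; simp [rvReward, redI]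
    have hgw : rvReward x n K (vv (4*n+1)) (if 4*n+1 = 0 then 0 else T (4*n+1-1)) (if 4*n+1 = k then H else T (4*n+1)) = 1 := by
      have hw : vv (4*n+1) = RVert.w := pathV_w (by omega)
      rw [hw, if_neg (by omega), if_pos hk.symm, show 4*n+1-1 = 4*n by omega, hTu]
      simp only [rvReward, redI, Finset.sum_singleton]
      rw [vol_full _ _ _ _ (le_refl _) (le_refl _) (by rw [hH]; linarith)]
      simp [hH]
    have hsum2 : ∑ j ∈ Finset.range n,
        (rvReward x n K (vv (4*j)) (if 4*j = 0 then 0 else T (4*j-1)) (if 4*j = k then H else T (4*j))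
        + rvReward x n K (vv (4*j+1)) (if 4*j+1 = 0 then 0 else T (4*j+1-1)) (if 4*j+1 = k then H else T (4*j+1))
        + rvReward x n K (vv (4*j+2)) (if 4*j+2 = 0 then 0 else T (4*j+2-1)) (if 4*j+2 = k then H else T (4*j+2))
        + rvReward x n K (vv (4*j+3)) (if 4*j+3 = 0 then 0 else T (4*j+3-1)) (if 4*j+3 = k then H else T (4*j+3)))
        = (K : ℝ) / (kap x n : ℝ) := by
      have : ∀ j ∈ Finset.range n, (rvReward x n K (vv (4*j)) (if 4*j = 0 then 0 else T (4*j-1)) (if 4*j = k then H else T (4*j))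
        + rvReward x n K (vv (4*j+1)) (if 4*j+1 = 0 then 0 else T (4*j+1-1)) (if 4*j+1 = k then H else T (4*j+1))
        + rvReward x n K (vv (4*j+2)) (if 4*j+2 = 0 then 0 else T (4*j+2-1)) (if 4*j+2 = k then H else T (4*j+2))
        + rvReward x n K (vv (4*j+3)) (if 4*j+3 = 0 then 0 else T (4*j+3-1)) (if 4*j+3 = k then H else T (4*j+3)))
          = (if j+1 ∈ S then alphav x n (j+1) else 0) := by
        intro j hj
        rw [Finset.mem_range] at hj
        have h1 : ¬ (4*j+1 = 0) := by omega
        have h2 : ¬ (4*j+2 = 0) := by omega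
        have h3 : ¬ (4*j+3 = 0) := by omega
        rw [if_neg h1, if_neg h2, if_neg h3,
          show 4*j+1-1 = 4*j by omega, show 4*j+2-1 = 4*j+1 by omega,
          show 4*j+3-1 = 4*j+2 by omega]
        exact hblock j hj
      rw [Finset.sum_congr rfl this]
      have hshift : ∑ j ∈ Finset.range n, (if j+1 ∈ S then alphav x n (j+1) else 0)
          = ∑ i ∈ Finset.Icc 1 n, (if i ∈ S then alphav x n i else 0) := by
        rw [← Finset.Ico_add_one_right_eq_Icc, Finset.sum_Ico_eq_sum_range,
          show n+1-1 = n by omega]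
        apply Finset.sum_congr rfl
        intro j _
        rw [add_comm 1 j]
      rw [hshift, sumIte_eq x S hsub]
      rw [← hsum]
      unfold alphav
      rw [← Finset.sum_div]
      push_cast
      rfl
    rw [hsum2, hgu, hgw]
    ring
  
/-! Timing profile facts. -/

lemma ellPlus_step (x : ℕ → ℕ) (v : ℕ → RVert) (k m : ℕ) (hm : m < k) :
    rEllPlus x v k m ≤ rEllPlus x v k (m+1) := by
  unfold rEllPlus
  rw [rPathLen_succ, if_pos hm]
  have h1 := redLen_nonneg x (v m) (v (m+1))
  split_ifs with h
  · have h2 := redLen_nonneg x (v (m+1)) (v (m+1+1)); linarith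
  · linarith

lemma T_ge {x : ℕ → ℕ} {v : ℕ → RVert} {k : ℕ} {Hr : ℝ} {T : ℕ → ℝ}
    (hTP : rIsTP x v k Hr T) : ∀ m, m < k → rEllPlus x v k m ≤ T m := by
  intro m
  induction m with
  | zero => intro h; exact hTP.1 (by omega)
  | succ m ih =>
      intro h
      have h1 := hTP.2.1 m (by omega)
      have h2 := ih (by omega)
      linarith

lemma T_mono {x : ℕ → ℕ} {v : ℕ → RVert} {k : ℕ} {Hr : ℝ} {T : ℕ → ℝ}
    (hTP : rIsTP x v k Hr T) (m : ℕ) (hm : m + 2 ≤ k) : T m ≤ T (m+1) := by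
  have h1 := hTP.2.1 m hm
  have h2 := ellPlus_step x v k m (by omega)
  linarith

lemma T_last {x : ℕ → ℕ} {v : ℕ → RVert} {k : ℕ} {Hr : ℝ} {T : ℕ → ℝ}
    (hTP : rIsTP x v k Hr T) (hk : 1 ≤ k) : T (k-1) ≤ Hr := by
  have h1 := hTP.2.2 hk
  have h2 := ellPlus_step x v k (k-1) (by omega)
  rw [show k-1+1 = k by omega] at h2
  linarith

/-! Reward bounds. -/

section RvBounds
variable {x : ℕ → ℕ} {K : ℕ}

lemma rv_a (i : ℕ) (t t' : ℝ) : rvReward x n K (RVert.a i) t t' = 0 := by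
  simp [rvReward, redI]

lemma rv_d (i : ℕ) (t t' : ℝ) : rvReward x n K (RVert.d i) t t' = 0 := by
  simp [rvReward, redI]

lemma rv_e (i : ℕ) (t t' : ℝ) : rvReward x n K (RVert.e i) t t' = 0 := by
  simp [rvReward, redI]

lemma rv_f (i : ℕ) (t t' : ℝ) : rvReward x n K (RVert.f i) t t' = 0 := by
  simp [rvReward, redI]

lemma rv_u (t t' : ℝ) : rvReward x n K RVert.u t t' = 0 := by
  simp [rvReward, redI]

lemma rv_w_le (t t' : ℝ) : rvReward x n K RVert.w t t' ≤ 1 := by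
  simp only [rvReward, redI, Finset.sum_singleton]
  have := vol_le t t' ((yv x n : ℝ) + K) ((yv x n : ℝ) + K + 1) (by linarith)
  linarith

lemma rv_b_le (h1 : 1 ≤ i) (h2 : i ≤ n) (hα : 0 ≤ alphav x n i) (t t' : ℝ) :
    rvReward x n K (RVert.b i) t t' ≤ alphav x n i := by
  simp only [rvReward, redI, h1, h2, and_true, true_and, if_pos, Finset.sum_singleton]
  have := vol_le t t' ((yv x i : ℝ)) ((yv x i : ℝ) + alphav x n i) (by linarith)
  linarith

lemma rv_bc_pair (h1 : 1 ≤ i) (h2 : i ≤ n) (hα : 0 ≤ alphav x n i) (t1 t2 t3 : ℝ)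
    (h12 : t1 ≤ t2) (h23 : t2 ≤ t3) :
    rvReward x n K (RVert.b i) t1 t2 + rvReward x n K (RVert.c i) t2 t3 ≤ alphav x n i := by
  simp only [rvReward, redI, h1, h2, and_true, true_and, if_pos, Finset.sum_singleton]
  rw [vol_pair _ _ _ _ _ h12 h23]
  have := vol_le t1 t3 ((yv x i : ℝ)) ((yv x i : ℝ) + alphav x n i) (by linarith)
  linarith

end RvBounds

/-! Backward structure lemma. -/

lemma back_struct (v : ℕ → RVert) (k : ℕ) (hpath : rIsPath n v k)
    (h0 : v 0 = RVert.a 1) (hn : 1 ≤ n) (St : Finset ℕ)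
    (hSt : ∀ i, i ∈ St ↔ (1 ≤ i ∧ i ≤ n ∧ 4*(i-1)+1 ≤ k ∧ v (4*(i-1)+1) = RVert.b i)) :
    ∀ m, m ≤ k → m ≤ 4*n+1 ∧ v m = pathV n St m := by
  intro m
  induction m with
  | zero =>
      intro _
      refine ⟨by omega, ?_⟩
      rw [h0]
      exact ((pathV_a (n := n) (S := St) (i := 1) le_rfl hn).trans (by norm_num)).symm
  | succ m ih =>
      intro hm
      obtain ⟨hm4, hvm⟩ := ih (by omega)
      have hedge := hpath m (by omega)
      rw [hvm] at hedge
      by_cases hw : m = 4*n+1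
      · rw [hw, pathV_w (by omega)] at hedge
        exact (redE_from_w hedge).elim
      by_cases hu : m = 4*n
      · rw [hu, pathV_u] at hedge
        have hq := redE_from_u hedge
        refine ⟨by omega, ?_⟩
        rw [show m+1 = 4*n+1 by omega, hq, pathV_w (by omega)]
      have hlt : m < 4*n := by omega
      set i := m/4 + 1 with hidef
      have hi1 : 1 ≤ i := by omega
      have hi2 : i ≤ n := by omega
      have h4 : m % 4 = 0 ∨ m % 4 = 1 ∨ m % 4 = 2 ∨ m % 4 = 3 := by omega
      refine ⟨by omega, ?_⟩
      rcases h4 with h4|h4|h4|h4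
      · have e1 : m = 4*(i-1) := by omega
        have e2 : m + 1 = 4*(i-1)+1 := by omega
        have hpv : pathV n St m = RVert.a i := by rw [e1]; exact pathV_a hi1 hi2
        rw [hpv] at hedge
        obtain ⟨-, -, hq⟩ := redE_from_a hedge
        rcases hq with hq | hq
        · have hSti : i ∈ St := (hSt i).mpr ⟨hi1, hi2, by omega, by rw [← e2]; exact hq⟩
          rw [hq, e2, pathV_b hi1 hi2 hSti]
        · have hSti : i ∉ St := by
            intro hmem
            have h5 := ((hSt i).mp hmem).2.2.2
            rw [← e2, hq] at h5
            simp at h5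
          rw [hq, e2, pathV_d hi1 hi2 hSti]
      · have e1 : m = 4*(i-1)+1 := by omega
        have e2 : m + 1 = 4*(i-1)+2 := by omega
        by_cases hSti : i ∈ St
        · have hpv : pathV n St m = RVert.b i := by rw [e1]; exact pathV_b hi1 hi2 hSti
          rw [hpv] at hedge
          rw [redE_from_b hedge, e2, pathV_c hi1 hi2 hSti]
        · have hpv : pathV n St m = RVert.d i := by rw [e1]; exact pathV_d hi1 hi2 hSti
          rw [hpv] at hedge
          rw [redE_from_d hedge, e2, pathV_e hi1 hi2 hSti]
      · have e1 : m = 4*(i-1)+2 := by omega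
        have e2 : m + 1 = 4*(i-1)+3 := by omega
        by_cases hSti : i ∈ St
        · have hpv : pathV n St m = RVert.c i := by rw [e1]; exact pathV_c hi1 hi2 hSti
          rw [hpv] at hedge
          rw [redE_from_c hedge, e2, pathV_f hi1 hi2]
        · have hpv : pathV n St m = RVert.e i := by rw [e1]; exact pathV_e hi1 hi2 hSti
          rw [hpv] at hedge
          rw [redE_from_e hedge, e2, pathV_f hi1 hi2]
      · have e1 : m = 4*(i-1)+3 := by omega
        have hpv : pathV n St m = RVert.f i := by rw [e1]; exact pathV_f hi1 hi2
        rw [hpv] at hedge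
        rcases redE_from_f hedge with ⟨hin, hq⟩ | ⟨hin, hq⟩
        · have e2 : m + 1 = 4*((i+1)-1) := by omega
          rw [hq, e2, pathV_a (by omega) (by omega)]
        · have e2 : m + 1 = 4*n := by omega
          rw [hq, e2, pathV_u]

lemma sum_shift (n : ℕ) (f : ℕ → ℝ) :
    ∑ j ∈ Finset.range n, f (j+1) = ∑ i ∈ Finset.Icc 1 n, f i := by
  rw [← Finset.Ico_add_one_right_eq_Icc, Finset.sum_Ico_eq_sum_range, show n+1-1 = n by omega]
  apply Finset.sum_congr rfl
  intro j _
  rw [add_comm 1 j]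

/-- The backward direction. -/
lemma backward (n : ℕ) (hn : 1 ≤ n) (x : ℕ → ℕ) (hx : ∀ i, 1 ≤ i → i ≤ n → 0 < x i)
    (K : ℕ) (hK : 0 < K)
    (v : ℕ → RVert) (k : ℕ) (T : ℕ → ℝ)
    (hpath : rIsPath n v k) (h0 : v 0 = RVert.a 1)
    (hTP : rIsTP x v k ((yv x n : ℝ) + K + 1) T)
    (hadm : rAdmissible x n K v k T)
    (hrew : rProfReward x n K v k ((yv x n : ℝ) + K + 1) T = 1 + (K : ℝ) / (kap x n : ℝ)) :
    ∃ S : Finset ℕ, S ⊆ Finset.Icc 1 n ∧ ∑ i ∈ S, x i = K := by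
  classical
  set H : ℝ := (yv x n : ℝ) + K + 1 with hH
  set St : Finset ℕ :=
    (Finset.Icc 1 n).filter (fun i => 4*(i-1)+1 ≤ k ∧ v (4*(i-1)+1) = RVert.b i) with hStdef
  have hStc : ∀ i, i ∈ St ↔ (1 ≤ i ∧ i ≤ n ∧ 4*(i-1)+1 ≤ k ∧ v (4*(i-1)+1) = RVert.b i) := by
    intro i
    rw [hStdef, Finset.mem_filter, Finset.mem_Icc]
    tauto
  have hsubSt : St ⊆ Finset.Icc 1 n := Finset.filter_subset _ _
  have hstruct := back_struct v k hpath h0 hn St hStc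
  have hk4 : k ≤ 4*n+1 := (hstruct k le_rfl).1
  have hvm : ∀ m, m ≤ k → v m = pathV n St m := fun m hm => (hstruct m hm).2
  have hkapn : 0 < kap x n := kapn_pos x hn (hx 1 le_rfl hn)
  have hκ : (0:ℝ) < (kap x n : ℝ) := by exact_mod_cast hkapn
  have hαnn : ∀ i, 0 ≤ alphav x n i := fun i => by rw [alphav]; positivity
  set g : ℕ → ℝ := fun m =>
    rvReward x n K (v m) (if m = 0 then 0 else T (m-1)) (if m = k then H else T m) with hg
  set G : ℕ → ℝ := fun m => if m ≤ k then g m else 0 with hG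
  have hsum1 : (∑ m ∈ Finset.range (k+1), g m) = ∑ m ∈ Finset.range (4*n+2), G m := by
    have e1 : ∀ m ∈ Finset.range (k+1), g m = G m := by
      intro m hm
      rw [Finset.mem_range] at hm
      simp only [hG]
      rw [if_pos (by omega)]
    rw [Finset.sum_congr rfl e1]
    apply Finset.sum_subset (Finset.range_subset_range.mpr (by omega))
    intro m hm1 hm2
    rw [Finset.mem_range] at hm1 hm2
    show (if m ≤ k then g m else 0) = 0
    rw [if_neg (by omega)]
  have hblocks : ∑ m ∈ Finset.range (4*n+2), G m
      = (∑ j ∈ Finset.range n, (G (4*j) + G (4*j+1) + G (4*j+2) + G (4*j+3)))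
        + G (4*n) + G (4*n+1) := by
    rw [show 4*n+2 = 4*n+1+1 by omega, Finset.sum_range_succ, Finset.sum_range_succ, sum_blocks]
  have hGa : ∀ j, j < n → G (4*j) = 0 := by
    intro j hj
    simp only [hG]
    split_ifs with h
    · have hva : v (4*j) = RVert.a (j+1) := by
        rw [hvm _ h]
        have := pathV_a (n := n) (S := St) (i := j+1) (by omega) (by omega)
        simpa using this
      simp only [hg]
      rw [hva, rv_a]
    · rfl
  have hGf : ∀ j, j < n → G (4*j+3) = 0 := by
    intro j hj
    simp only [hG]
    split_ifs with h
    · have hvf : v (4*j+3) = RVert.f (j+1) := by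
        rw [hvm _ h]
        have := pathV_f (n := n) (S := St) (i := j+1) (by omega) (by omega)
        simpa using this
      simp only [hg]
      rw [hvf, rv_f]
    · rfl
  have hGu : G (4*n) = 0 := by
    simp only [hG]
    split_ifs with h
    · have hvu : v (4*n) = RVert.u := by rw [hvm _ h]; exact pathV_u
      simp only [hg]
      rw [hvu, rv_u]
    · rfl
  have hGbc : ∀ j, j < n → G (4*j+1) + G (4*j+2) ≤ (if j+1 ∈ St then alphav x n (j+1) else 0) := by
    intro j hj
    by_cases hSti : j+1 ∈ St
    · rw [if_pos hSti]
      obtain ⟨-, -, hbk, hvb⟩ := (hStc (j+1)).mp hSti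
      have hbk' : 4*j+1 ≤ k := by omega
      have hvb' : v (4*j+1) = RVert.b (j+1) := by
        have e : 4*(j+1-1)+1 = 4*j+1 := by omega
        rw [e] at hvb; exact hvb
      have hG1 : G (4*j+1) = g (4*j+1) := by simp only [hG]; rw [if_pos hbk']
      by_cases h2k : 4*j+2 ≤ k
      · have hvc : v (4*j+2) = RVert.c (j+1) := by
          rw [hvm _ h2k]
          have := pathV_c (n := n) (S := St) (i := j+1) (by omega) (by omega) hSti
          simpa using this
        have hG2 : G (4*j+2) = g (4*j+2) := by simp only [hG]; rw [if_pos h2k]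
        rw [hG1, hG2]
        simp only [hg]
        rw [hvb', hvc, if_neg (show ¬(4*j+1 = 0) by omega), if_neg (show ¬(4*j+2 = 0) by omega),
          if_neg (show ¬(4*j+1 = k) by omega), show 4*j+1-1 = 4*j by omega,
          show 4*j+2-1 = 4*j+1 by omega]
        by_cases hke : 4*j+2 = k
        · rw [if_pos hke]
          refine rv_bc_pair (by omega) (by omega) (hαnn _) _ _ _
            (T_mono hTP (4*j) (by omega)) ?_
          have hlast := T_last hTP (by omega)
          rw [show k-1 = 4*j+1 by omega] at hlast
          exact hlast
        · rw [if_neg hke]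
          exact rv_bc_pair (by omega) (by omega) (hαnn _) _ _ _
            (T_mono hTP (4*j) (by omega)) (T_mono hTP (4*j+1) (by omega))
      · have hG2 : G (4*j+2) = 0 := by simp only [hG]; rw [if_neg h2k]
        rw [hG1, hG2, add_zero]
        simp only [hg]
        rw [hvb']
        exact rv_b_le (by omega) (by omega) (hαnn _) _ _
    · rw [if_neg hSti]
      have hG1 : G (4*j+1) = 0 := by
        simp only [hG]
        split_ifs with h
        · have hvd : v (4*j+1) = RVert.d (j+1) := by
            rw [hvm _ h]
            have := pathV_d (n := n) (S := St) (i := j+1) (by omega) (by omega) hSti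
            simpa using this
          simp only [hg]
          rw [hvd, rv_d]
        · rfl
      have hG2 : G (4*j+2) = 0 := by
        simp only [hG]
        split_ifs with h
        · have hve : v (4*j+2) = RVert.e (j+1) := by
            rw [hvm _ h]
            have := pathV_e (n := n) (S := St) (i := j+1) (by omega) (by omega) hSti
            simpa using this
          simp only [hg]
          rw [hve, rv_e]
        · rfl
      rw [hG1, hG2]
      norm_num
  have hGw : G (4*n+1) ≤ (if k = 4*n+1 then 1 else 0) := by
    by_cases hke : k = 4*n+1
    · rw [if_pos hke]
      have h1 : 4*n+1 ≤ k := by omega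
      have hvw : v (4*n+1) = RVert.w := by
        rw [hvm _ h1]; exact pathV_w (by omega)
      simp only [hG]
      rw [if_pos h1]
      simp only [hg]
      rw [hvw]
      exact rv_w_le _ _
    · rw [if_neg hke]
      simp only [hG]
      rw [if_neg (by omega)]
  set P : ℕ := ∑ i ∈ St, x i with hP
  have hαeq : (∑ i ∈ Finset.Icc 1 n, (if i ∈ St then alphav x n i else 0))
      = (P:ℝ)/(kap x n : ℝ) := by
    rw [sumIte_eq x St hsubSt (alphav x n)]
    unfold alphav
    rw [← Finset.sum_div]
    congr 1
    push_cast [hP]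
    rfl
  have htot : 1 + (K : ℝ) / (kap x n : ℝ)
      ≤ (P:ℝ)/(kap x n : ℝ) + (if k = 4*n+1 then 1 else 0) := by
    rw [← hrew]
    show (∑ m ∈ Finset.range (k+1), g m) ≤ _
    rw [hsum1, hblocks, hGu, add_zero]
    apply add_le_add _ hGw
    rw [← hαeq, ← sum_shift n (fun i => if i ∈ St then alphav x n i else 0)]
    apply Finset.sum_le_sum
    intro j hj
    rw [Finset.mem_range] at hj
    rw [hGa j hj, hGf j hj, zero_add, add_zero]
    exact hGbc j hj
  by_cases hke : k = 4*n+1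
  · -- the path reaches w; extract the subset
    have hvu : v (4*n) = RVert.u := by rw [hvm _ (by omega)]; exact pathV_u
    have hTub : T (4*n) ≤ (yv x n : ℝ) + K := hadm.1 (4*n) (by omega) hvu
    have hTlb : rEllPlus x v k (4*n) ≤ T (4*n) := T_ge hTP (4*n) (by omega)
    have hEll : rEllPlus x v k (4*n) = (yv x n : ℝ) + (P:ℝ) := by
      unfold rEllPlus
      rw [if_pos (by omega), hvu, redLen_u]
      have hPL : rPathLen x v (4*n) = rPathLen x (pathV n St) (4*n) := by
        unfold rPathLen
        apply Finset.sum_congr rfl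
        intro mm hmm
        rw [Finset.mem_range] at hmm
        rw [hvm mm (by omega), hvm (mm+1) (by omega)]
      rw [hPL, rPathLen_pathV x le_rfl, sumIte_eq x St hsubSt]
      have : ((∑ i ∈ St, x i : ℕ) : ℝ) = ∑ i ∈ St, ((x i : ℕ) : ℝ) := by push_cast; rfl
      rw [hP, this]
      norm_num
    have hPK1 : (P:ℝ) ≤ (K:ℝ) := by linarith
    have hPK2 : (K:ℝ) ≤ (P:ℝ) := by
      rw [if_pos hke] at htot
      have h2 : (K : ℝ)/(kap x n : ℝ) ≤ (P:ℝ)/(kap x n : ℝ) := by linarith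
      calc (K:ℝ) = (K:ℝ)/(kap x n : ℝ) * (kap x n : ℝ) := by field_simp
        _ ≤ (P:ℝ)/(kap x n : ℝ) * (kap x n : ℝ) := by
            apply mul_le_mul_of_nonneg_right h2 (le_of_lt hκ)
        _ = (P:ℝ) := by field_simp
    have hPK : P = K := by
      have h1 : P ≤ K := by exact_mod_cast hPK1
      have h2 : K ≤ P := by exact_mod_cast hPK2
      omega
    exact ⟨St, hsubSt, hPK⟩
  · -- \"the path does not reach w\" leads to a contradiction
    exfalso
    rw [if_neg hke] at htot
    have hPκ : P ≤ kap x n := by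
      rw [hP]
      unfold kap
      exact Finset.sum_le_sum_of_subset hsubSt
    have h1 : (P:ℝ)/(kap x n : ℝ) ≤ 1 := by
      rw [div_le_one hκ]
      exact_mod_cast hPκ
    have h2 : (0:ℝ) < (K : ℝ)/(kap x n : ℝ) := by
      apply div_pos _ hκ
      exact_mod_cast hK
    linarith

end Stmt16Aux

/-- **Theorem 2: correctness of the reduction.** There is a
subset `S ⊆ {1, …, n}` with `Σ_{i ∈ S} x_i = K` iff there exist a path `π`
from `a_1` and an admissible timing profile `T` for `π` whose reward equals
`1 + K/κ_n` (the optimal achievable reward); this proves OPTP NP-hard by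
reduction from subset-sum. -/
theorem stmt16 (n : ℕ) (hn : 1 ≤ n) (x : ℕ → ℕ)
    (hx : ∀ i, 1 ≤ i → i ≤ n → 0 < x i)
    (hmono : ∀ i j, 1 ≤ i → i ≤ j → j ≤ n → x i ≤ x j)
    (K : ℕ) (hK : 0 < K) (hKn : K ≤ kap x n) :
    (∃ S : Finset ℕ, S ⊆ Finset.Icc 1 n ∧ ∑ i ∈ S, x i = K) ↔
      (∃ (v : ℕ → RVert) (k : ℕ) (T : ℕ → ℝ),
        rIsPath n v k ∧ v 0 = RVert.a 1 ∧
        rIsTP x v k ((yv x n : ℝ) + K + 1) T ∧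
        rAdmissible x n K v k T ∧
        rProfReward x n K v k ((yv x n : ℝ) + K + 1) T = 1 + (K : ℝ) / (kap x n : ℝ)) := by
  constructor
  · rintro ⟨S, hsub, hsum⟩
    exact Stmt16Aux.forward n hn x hx K S hsub hsum
  · rintro ⟨v, k, T, hpath, h0, hTP, hadm, hrew⟩
    exact Stmt16Aux.backward n hn x hx K hK v k T hpath h0 hTP hadm hrew
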